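/- arXiv:1901.02178 — 2 statements merged into one kernel-verified Lean document; each statement's English description precedes it below -/
import Mathlib

section
/- A cyclic trajectory that visits each of n terminals exactly once every n time-slots achieves average age exactly (n+1)/2 at every terminal, hence network average age n(n+1)/2 with unit weights; thus if the mobility graph is Hamiltonian, the average-age lower bound n(n+1)/2 is attained. -/
/-!
The trajectory is `n`-periodic and visits terminal `i` exactly at the times congruent to some
`τ < n` modulo `n`, so from time `τ + n` on the age of `i` runs periodically through
`1, 2, …, n`. A Cesàro mean is insensitive to finitely many initial terms, and for an
`n`-periodic sequence it converges to the average over one period, here `(n + 1) / 2`.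
-/

open Finset Filter Function

noncomputable def cesaroMean (f : ℕ → ℝ) (T : ℕ) : ℝ := (∑ t ∈ range T, f t) / T

theorem tendsto_div_natCast_of_periodic_sub {S : ℕ → ℝ} {n : ℕ} {l : ℝ} (hn : 0 < n)
    (hS : Periodic (fun T => S T - T * l) n) :
    Tendsto (fun T : ℕ => S T / T) atTop (nhds l) := by
  set h : ℕ → ℝ := fun T => S T - T * l
  have hbdd : IsBoundedUnder (· ≤ ·) atTop (norm ∘ h) := by
    refine isBoundedUnder_of ⟨∑ r ∈ range n, ‖h r‖, fun T => ?_⟩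
    rw [comp_apply, ← hS.map_mod_nat T]
    exact single_le_sum (fun r _ => norm_nonneg (h r)) (mem_range.2 (Nat.mod_lt T hn))
  have hlim : Tendsto (fun T : ℕ => h T * (T : ℝ)⁻¹ + l) atTop (nhds (0 + l)) :=
    (isBoundedUnder_le_mul_tendsto_zero hbdd tendsto_inv_atTop_nhds_zero_nat).add_const l
  rw [zero_add] at hlim
  refine hlim.congr' ((eventually_ne_atTop 0).mono fun T hT => ?_)
  simp only [h]
  field_simp
  ring

theorem Function.Periodic.tendsto_cesaroMean {f : ℕ → ℝ} {n : ℕ} (hf : Periodic f n)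
    (hn : 0 < n) :
    Tendsto (cesaroMean f) atTop (nhds ((∑ t ∈ range n, f t) / n)) := by
  refine tendsto_div_natCast_of_periodic_sub hn fun T => ?_
  have hsum : ∑ t ∈ range (T + n), f t = (∑ t ∈ range T, f t) + ∑ t ∈ range n, f t := by
    rw [add_comm T, sum_range_add, add_comm]
    simp only [add_comm n, hf _]
  simp only [hsum]
  push_cast
  field_simp
  ring

theorem tendsto_cesaroMean_of_comp_add {f : ℕ → ℝ} {l : ℝ} (N : ℕ)
    (h : Tendsto (cesaroMean fun t => f (N + t)) atTop (nhds l)) :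
    Tendsto (cesaroMean f) atTop (nhds l) := by
  rw [← tendsto_add_atTop_iff_nat N]
  have hhead : Tendsto (fun T : ℕ => (∑ t ∈ range N, f t) / ((T + N : ℕ) : ℝ)) atTop (nhds 0) :=
    (tendsto_const_div_atTop_nhds_zero_nat _).comp (tendsto_add_atTop_nat N)
  have hlim := hhead.add ((tendsto_natCast_div_add_atTop (N : ℝ)).mul h)
  rw [zero_add, one_mul] at hlim
  refine hlim.congr' ((eventually_ne_atTop 0).mono fun T hT => ?_)
  simp only [cesaroMean]
  rw [add_comm T, sum_range_add]
  push_cast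
  field_simp
  ring

theorem Function.Periodic.apply_eq_iff_mod_eq {α : Type*} {m : ℕ → α} {n : ℕ} (hm : Periodic m n)
    (hn : 0 < n) {i : α} (hvisit : ∃! t : Fin n, m t = i) {τ : Fin n} (hτ : m τ = i) (t : ℕ) :
    m t = i ↔ t % n = τ := by
  rw [← hm.map_mod_nat t]
  refine ⟨fun ht => ?_, fun ht => ht ▸ hτ⟩
  exact congrArg Fin.val (hvisit.unique (y₁ := ⟨t % n, Nat.mod_lt t hn⟩) ht hτ)

theorem Nat.add_mod_ne_self {a j n : ℕ} (ha : a < n) (hj : 0 < j) (hjn : j < n) :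
    (a + j) % n ≠ a := by
  intro h
  have hmod : a + j ≡ a + 0 [MOD n] := h.trans (Nat.mod_eq_of_lt ha).symm
  have hj0 : j % n = 0 := Nat.ModEq.add_left_cancel' a hmod
  rw [Nat.mod_eq_of_lt hjn] at hj0
  omega

section Age

variable {α : Type*} [DecidableEq α] {m : ℕ → α} {i : α} {A : ℕ → ℕ}

theorem age_add_eq_of_visit (hA : ∀ t, A (t + 1) = if m (t + 1) = i then 1 else A t + 1)
    {τ s : ℕ} (hτ0 : 0 < τ) (hτ : m τ = i) (hgap : ∀ j, 0 < j → j ≤ s → m (τ + j) ≠ i) :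
    A (τ + s) = s + 1 := by
  induction s with
  | zero =>
    obtain ⟨t, rfl⟩ := Nat.exists_eq_add_one_of_ne_zero hτ0.ne'
    simp [hA, hτ]
  | succ s ih =>
    have hnext : m (τ + s + 1) ≠ i := hgap (s + 1) s.succ_pos le_rfl
    rw [← add_assoc, hA, if_neg hnext, ih fun j hj hjs => hgap j hj (hjs.trans s.le_succ)]

theorem age_eq_mod_of_periodic (hA : ∀ t, A (t + 1) = if m (t + 1) = i then 1 else A t + 1)
    {n : ℕ} (hm : Periodic m n) (hn : 0 < n) (hvisit : ∃! t : Fin n, m t = i)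
    {τ : Fin n} (hτ : m τ = i) (s : ℕ) :
    A (τ + n + s) = s % n + 1 := by
  have hvis := hm.apply_eq_iff_mod_eq hn hvisit hτ
  -- the last visit of `i` up to time `τ + n + s` is at `τ + n + n * (s / n)`
  have hsplit : τ + n + s = (τ + n + n * (s / n)) + s % n := by
    rw [add_assoc (τ + n : ℕ), Nat.div_add_mod]
  rw [hsplit]
  refine age_add_eq_of_visit hA (by omega) ?_ fun j hj hjs => ?_
  · rw [hvis, Nat.add_mul_mod_self_left, Nat.add_mod_right, Nat.mod_eq_of_lt τ.isLt]
  · rw [Ne, hvis, Nat.add_right_comm, Nat.add_mul_mod_self_left, Nat.add_right_comm,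
      Nat.add_mod_right]
    exact Nat.add_mod_ne_self τ.isLt hj (hjs.trans_lt (Nat.mod_lt s hn))

end Age

theorem sum_range_natCast_add_one (n : ℕ) : ∑ s ∈ range n, ((s : ℝ) + 1) = n * (n + 1) / 2 := by
  induction n with
  | zero => simp
  | succ n ih =>
    rw [sum_range_succ, ih]
    push_cast
    ring

theorem stmt7 {V : Type*} [Fintype V] [DecidableEq V] (n : ℕ) (hn : n = Fintype.card V)
    (hn1 : 0 < n)
    (m : ℕ → V) (hper : ∀ t, m (t + n) = m t)
    (hvisit : ∀ i : V, ∃! t : Fin n, m t = i)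
    (A : V → ℕ → ℕ)
    (hA : ∀ i t, A i (t + 1) = if m (t + 1) = i then 1 else A i t + 1) :
    (∀ i, Tendsto (fun T : ℕ => (∑ t ∈ Finset.range T, (A i t : ℝ)) / T) atTop
      (nhds (((n : ℝ) + 1) / 2))) ∧
    Tendsto (fun T : ℕ => ∑ i : V, (∑ t ∈ Finset.range T, (A i t : ℝ)) / T) atTop
      (nhds ((n : ℝ) * (n + 1) / 2)) := by
  have hperiod : (∑ s ∈ range n, ((s % n + 1 : ℕ) : ℝ)) / n = ((n : ℝ) + 1) / 2 := by
    rw [sum_congr rfl fun s hs => by rw [Nat.mod_eq_of_lt (mem_range.1 hs)]]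
    push_cast
    rw [sum_range_natCast_add_one]
    field_simp
  have hage : ∀ i, Tendsto (cesaroMean fun t => (A i t : ℝ)) atTop
      (nhds (((n : ℝ) + 1) / 2)) := by
    intro i
    obtain ⟨τ, hτ, -⟩ := hvisit i
    refine tendsto_cesaroMean_of_comp_add (τ + n) ?_
    simp only [age_eq_mod_of_periodic (hA i) hper hn1 (hvisit i) hτ]
    exact hperiod ▸ ((Nat.periodic_mod n).comp fun k => ((k + 1 : ℕ) : ℝ)).tendsto_cesaroMean hn1
  refine ⟨hage, ?_⟩
  have hsum : ∑ _i : V, ((n : ℝ) + 1) / 2 = (n : ℝ) * (n + 1) / 2 := by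
    rw [sum_const, card_univ, ← hn, nsmul_eq_mul, mul_div_assoc]
  exact hsum ▸ tendsto_finsetSum univ fun i _ => hage i
end

section
/- If a trajectory visits every one of n vertices at least once in every window of 2n consecutive time-slots, then the average age of every terminal is at most (2n+1)/2, so with unit weights the network average age is at most n(2n+1)/2, hence within a factor (2n+1)/(n+1) ≤ 2 of the optimal n(n+1)/2. -/
/-!
Between two consecutive visits to a terminal its age runs through `1, 2, …, k` with `k ≤ 2n`,
contributing `k (k + 1) / 2 ≤ k (2n + 1) / 2` to the cumulative age, i.e. at most `(2n + 1) / 2`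
per slot. For the unfinished run at time `T` (current age `a`) this is the invariant
`2 ∑_{t ≤ T} a t + a T (2n - a T) ≤ (2n + 1) (T + 1)`, which holds with equality while the age
keeps growing and is preserved by every reset.
-/

open Finset Filter

section AgeProcess

variable {a : ℕ → ℕ} {N : ℕ}

lemma apply_add_le_of_forall_le_succ (hstep : ∀ t, a (t + 1) ≤ a t + 1) (s k : ℕ) :
    a (s + k) ≤ a s + k := by
  induction k with
  | zero => rfl
  | succ k ih => rw [← add_assoc]; have := hstep (s + k); omega

lemma apply_le_of_reset_in_every_window (h0 : a 0 = 1) (hstep : ∀ t, a (t + 1) ≤ a t + 1)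
    (hreset : ∀ t, ∃ s, t ≤ s ∧ s < t + N ∧ a s = 1) (t : ℕ) : a t ≤ N := by
  by_cases ht : t + 1 ≤ N
  · have := apply_add_le_of_forall_le_succ hstep 0 t
    rw [zero_add] at this
    omega
  · obtain ⟨s, hts, hsN, hs⟩ := hreset (t + 1 - N)
    have := apply_add_le_of_forall_le_succ hstep s (t - s)
    rw [Nat.add_sub_cancel' (by omega)] at this
    omega

lemma two_mul_sum_range_succ_add_le (h0 : a 0 = 1)
    (hstep : ∀ t, a (t + 1) = 1 ∨ a (t + 1) = a t + 1) (hbound : ∀ t, a t ≤ N) (T : ℕ) :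
    2 * ∑ t ∈ range (T + 1), a t + a T * (N - a T) ≤ (N + 1) * (T + 1) := by
  induction T with
  | zero =>
    have := hbound 0
    simp only [zero_add, range_one, sum_singleton, h0]
    omega
  | succ T ih =>
    rw [sum_range_succ]
    have hT := hbound T
    have hT1 := hbound (T + 1)
    zify [hT, hT1] at ih ⊢
    rcases hstep T with hreset | hgrow
    · rw [hreset] at hT1 ⊢
      push_cast
      nlinarith
    · rw [hgrow] at hT1 ⊢
      push_cast at hT1 ⊢
      nlinarith

lemma two_mul_sum_range_le (h0 : a 0 = 1)
    (hstep : ∀ t, a (t + 1) = 1 ∨ a (t + 1) = a t + 1) (hbound : ∀ t, a t ≤ N) (T : ℕ) :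
    2 * ∑ t ∈ range T, a t ≤ (N + 1) * T := by
  cases T with
  | zero => simp
  | succ T => exact le_of_add_le_left (two_mul_sum_range_succ_add_le h0 hstep hbound T)

lemma average_le (h0 : a 0 = 1)
    (hstep : ∀ t, a (t + 1) = 1 ∨ a (t + 1) = a t + 1) (hbound : ∀ t, a t ≤ N) (T : ℕ) :
    (∑ t ∈ range T, (a t : ℝ)) / T ≤ ((N : ℝ) + 1) / 2 := by
  rcases T.eq_zero_or_pos with rfl | hT
  · simp only [range_zero, sum_empty, CharP.cast_eq_zero, div_zero]
    positivity
  · rw [div_le_iff₀ (by positivity)]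
    have : ((2 * ∑ t ∈ range T, a t : ℕ) : ℝ) ≤ ((N + 1) * T : ℕ) := by
      exact_mod_cast two_mul_sum_range_le h0 hstep hbound T
    push_cast at this
    linarith

end AgeProcess

lemma limsup_le_of_nonneg_of_le {f : ℕ → ℝ} {c : ℝ} (hf0 : ∀ T, 0 ≤ f T) (hfc : ∀ T, f T ≤ c) :
    limsup f atTop ≤ c :=
  limsup_le_of_le (isCoboundedUnder_le_of_le atTop hf0) (.of_forall hfc)

theorem stmt8_general {V : Type*} [Fintype V] [DecidableEq V] (n : ℕ) (hn : n = Fintype.card V)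
    (m : ℕ → V)
    (hvisit : ∀ (i : V) (t : ℕ), ∃ s, t ≤ s ∧ s < t + 2 * n ∧ m s = i)
    (A : V → ℕ → ℕ)
    (hA0 : ∀ i, A i 0 = 1)
    (hA : ∀ i t, A i (t + 1) = if m (t + 1) = i then 1 else A i t + 1) :
    (∀ i, limsup (fun T : ℕ => (∑ t ∈ Finset.range T, (A i t : ℝ)) / T) atTop ≤
      (2 * (n : ℝ) + 1) / 2) ∧
    limsup (fun T : ℕ => ∑ i : V, (∑ t ∈ Finset.range T, (A i t : ℝ)) / T) atTop ≤
      (n : ℝ) * (2 * n + 1) / 2 ∧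
    (2 * (n : ℝ) + 1) / ((n : ℝ) + 1) ≤ 2 := by
  have hstep : ∀ i t, A i (t + 1) = 1 ∨ A i (t + 1) = A i t + 1 := fun i t => by
    rw [hA]; split_ifs <;> simp
  have hreset : ∀ i t, ∃ s, t ≤ s ∧ s < t + 2 * n ∧ A i s = 1 := fun i t => by
    obtain ⟨s, hts, hsn, hs⟩ := hvisit i t
    refine ⟨s, hts, hsn, ?_⟩
    cases s with
    | zero => exact hA0 i
    | succ s => rw [hA, if_pos hs]
  have havg : ∀ i T, (∑ t ∈ range T, (A i t : ℝ)) / T ≤ (2 * (n : ℝ) + 1) / 2 := fun i T => by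
    have hbound := apply_le_of_reset_in_every_window (hA0 i)
      (fun t => (hstep i t).elim (by omega) (by omega)) (hreset i)
    simpa using average_le (hA0 i) (hstep i) hbound T
  refine ⟨fun i => limsup_le_of_nonneg_of_le (fun T => by positivity) (havg i), ?_, ?_⟩
  · refine limsup_le_of_nonneg_of_le (fun T => by positivity) fun T => ?_
    calc ∑ i : V, (∑ t ∈ range T, (A i t : ℝ)) / T
        ≤ ∑ _i : V, (2 * (n : ℝ) + 1) / 2 := sum_le_sum fun i _ => havg i T
      _ = (n : ℝ) * (2 * n + 1) / 2 := by rw [sum_const, card_univ, ← hn, nsmul_eq_mul]; ring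
  · rw [div_le_iff₀ (by positivity)]
    linarith

theorem stmt8 {V : Type*} [Fintype V] [DecidableEq V] (n : ℕ) (hn : n = Fintype.card V)
    (hn1 : 0 < n)
    (m : ℕ → V)
    (hvisit : ∀ (i : V) (t : ℕ), ∃ s, t ≤ s ∧ s < t + 2 * n ∧ m s = i)
    (A : V → ℕ → ℕ)
    (hA0 : ∀ i, A i 0 = 1)
    (hA : ∀ i t, A i (t + 1) = if m (t + 1) = i then 1 else A i t + 1) :
    (∀ i, limsup (fun T : ℕ => (∑ t ∈ Finset.range T, (A i t : ℝ)) / T) atTop ≤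
      (2 * (n : ℝ) + 1) / 2) ∧
    limsup (fun T : ℕ => ∑ i : V, (∑ t ∈ Finset.range T, (A i t : ℝ)) / T) atTop ≤
      (n : ℝ) * (2 * n + 1) / 2 ∧
    (2 * (n : ℝ) + 1) / ((n : ℝ) + 1) ≤ 2 :=
  stmt8_general n hn m hvisit A hA0 hA
end
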